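/- Let M be a d×d integer matrix and p a prime. (i) If there exist n ∈ ℕ and i ∈ ℕ such that for every j with i ≤ j ≤ i+d the vector 𝟙M^j belongs to p^nℤ^d but does not belong to p^{n+1}ℤ^d, then for all j ≥ i the vector 𝟙M^j does not belong to p^{n+1}ℤ^d. (ii) As a consequence, if there exist integers n and k with 𝟙M^k ∈ p^nℤ^d, then 𝟙M^{nd} ∈ p^nℤ^d. -/

import Mathlib

/-!
Write `𝟙M^i = pⁿw`. Then `pⁿ⁺¹ ∣ 𝟙M^(i+m)` exactly when `wM^m ≡ 0 (mod p)`, and over `𝔽_p` the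
kernels of the powers of `M` stop growing once the exponent reaches `d`; so if `wM^m ≡ 0` for some
`m`, already `wM^d ≡ 0`. This gives (i). For (ii), induct on `m ≤ n`: if `pᵐ ∣ 𝟙M^(md)` but
`pᵐ⁺¹ ∤ 𝟙M^((m+1)d)`, then by (i) `pᵐ⁺¹ ∤ 𝟙M^j` for all `j ≥ md`, whereas divisibility by `pⁿ`
passes from `𝟙M^k` to every later power.
-/

open Matrix

section Field

variable {K ι : Type*} [Field K] [Fintype ι] [DecidableEq ι]

theorem vecMul_pow_card_eq_zero_of_vecMul_pow_eq_zero {A : Matrix ι ι K} {x : ι → K} {m : ℕ}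
    (h : x ᵥ* A ^ m = 0) : x ᵥ* A ^ Fintype.card ι = 0 := by
  have hlin : ∀ k, x ᵥ* A ^ k = (toLin' Aᵀ ^ k) x := fun k => by
    rw [← toLin'_pow, toLin'_apply, ← transpose_pow, mulVec_transpose]
  have hker := Module.End.ker_pow_le_ker_pow_finrank (toLin' Aᵀ) m
  rw [Module.finrank_fintype_fun_eq_card] at hker
  rw [hlin] at h ⊢
  exact hker h

end Field

theorem forall_dvd_iff_intCast_eq_zero {ι : Type*} (p : ℕ) (v : ι → ℤ) :
    (∀ t, (p : ℤ) ∣ v t) ↔ ((↑) ∘ v : ι → ZMod p) = 0 := by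
  simp [funext_iff, ZMod.intCast_zmod_eq_zero_iff_dvd]

section Integer

variable {ι : Type*} [Fintype ι] [DecidableEq ι]

theorem forall_dvd_vecMul_pow_of_le {a : ℤ} {x : ι → ℤ} {M : Matrix ι ι ℤ} {j j' : ℕ}
    (hj : j ≤ j') (h : ∀ t, a ∣ (x ᵥ* M ^ j) t) : ∀ t, a ∣ (x ᵥ* M ^ j') t := by
  intro t
  rw [← Nat.add_sub_cancel' hj, pow_add, ← vecMul_vecMul]
  exact Finset.dvd_sum fun s _ => (h s).mul_right _

theorem forall_dvd_vecMul_pow_card {p : ℕ} (hp : p.Prime) {w : ι → ℤ} {M : Matrix ι ι ℤ}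
    {m : ℕ} (h : ∀ t, (p : ℤ) ∣ (w ᵥ* M ^ m) t) :
    ∀ t, (p : ℤ) ∣ (w ᵥ* M ^ Fintype.card ι) t := by
  have : Fact p.Prime := ⟨hp⟩
  have hred : ∀ k, ((↑) ∘ (w ᵥ* M ^ k) : ι → ZMod p) =
      ((↑) ∘ w) ᵥ* (M.map (Int.castRingHom (ZMod p))) ^ k := fun k => by
    ext t
    rw [← RingHom.mapMatrix_apply, ← map_pow, RingHom.mapMatrix_apply]
    exact RingHom.map_vecMul (Int.castRingHom (ZMod p)) _ _ t
  rw [forall_dvd_iff_intCast_eq_zero, hred] at h ⊢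
  exact vecMul_pow_card_eq_zero_of_vecMul_pow_eq_zero h

theorem not_forall_pow_succ_dvd_vecMul_pow {p : ℕ} (hp : p.Prime) {x : ι → ℤ}
    {M : Matrix ι ι ℤ} {n i j : ℕ} (hdvd : ∀ t, (p : ℤ) ^ n ∣ (x ᵥ* M ^ i) t)
    (hnot : ¬ ∀ t, (p : ℤ) ^ (n + 1) ∣ (x ᵥ* M ^ (i + Fintype.card ι)) t) (hij : i ≤ j) :
    ¬ ∀ t, (p : ℤ) ^ (n + 1) ∣ (x ᵥ* M ^ j) t := by
  choose w hw using hdvd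
  have hpn : (p : ℤ) ^ n ≠ 0 := pow_ne_zero _ (by exact_mod_cast hp.ne_zero)
  have hsplit : ∀ m, (∀ t, (p : ℤ) ^ (n + 1) ∣ (x ᵥ* M ^ (i + m)) t) ↔
      ∀ t, (p : ℤ) ∣ (w ᵥ* M ^ m) t := fun m => by
    have hx : x ᵥ* M ^ i = (p : ℤ) ^ n • w := funext hw
    simp only [pow_add, ← vecMul_vecMul, hx, smul_vecMul, Pi.smul_apply, smul_eq_mul, pow_succ,
      mul_dvd_mul_iff_left hpn]
  obtain ⟨m, rfl⟩ := Nat.exists_eq_add_of_le hij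
  rw [hsplit] at hnot ⊢
  exact fun h => hnot (forall_dvd_vecMul_pow_card hp h)

theorem forall_pow_dvd_vecMul_pow_mul_card {p : ℕ} (hp : p.Prime) {x : ι → ℤ}
    {M : Matrix ι ι ℤ} {n k : ℕ} (hk : ∀ t, (p : ℤ) ^ n ∣ (x ᵥ* M ^ k) t) :
    ∀ t, (p : ℤ) ^ n ∣ (x ᵥ* M ^ (n * Fintype.card ι)) t := by
  suffices ∀ m ≤ n, ∀ t, (p : ℤ) ^ m ∣ (x ᵥ* M ^ (m * Fintype.card ι)) t from this n le_rfl
  intro m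
  induction m with
  | zero => simp
  | succ m ih =>
    intro hmn
    by_contra hnot
    rw [Nat.succ_mul] at hnot
    refine not_forall_pow_succ_dvd_vecMul_pow hp (ih (by omega)) hnot
      (le_max_right k (m * Fintype.card ι)) fun t => ?_
    exact (pow_dvd_pow _ hmn).trans (forall_dvd_vecMul_pow_of_le (le_max_left _ _) hk t)

end Integer

theorem ones_vecMul_power_stability_general
    {d : ℕ} (M : Matrix (Fin d) (Fin d) ℤ) (p : ℕ) (hp : p.Prime) :
    (∀ n i : ℕ,
      (∀ j : ℕ, i ≤ j → j ≤ i + d →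
        (∀ t : Fin d, (p : ℤ) ^ n ∣ Matrix.vecMul 1 (M ^ j) t) ∧
        ¬ (∀ t : Fin d, (p : ℤ) ^ (n + 1) ∣ Matrix.vecMul 1 (M ^ j) t)) →
      ∀ j : ℕ, i ≤ j →
        ¬ (∀ t : Fin d, (p : ℤ) ^ (n + 1) ∣ Matrix.vecMul 1 (M ^ j) t)) ∧
    (∀ n k : ℕ, (∀ t : Fin d, (p : ℤ) ^ n ∣ Matrix.vecMul 1 (M ^ k) t) →
      ∀ t : Fin d, (p : ℤ) ^ n ∣ Matrix.vecMul 1 (M ^ (n * d)) t) := by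
  refine ⟨fun n i h j hij => ?_, fun n k hk => ?_⟩
  · refine not_forall_pow_succ_dvd_vecMul_pow hp (h i le_rfl (by omega)).1 ?_ hij
    simpa using (h (i + d) (by omega) le_rfl).2
  · simpa using forall_pow_dvd_vecMul_pow_mul_card hp hk

/-- Let `M` be a `d × d` integer matrix and `p` a prime.
(i) If for some `n` and `i` each of `𝟙M^i, …, 𝟙M^{i+d}` lies in `p^nℤ^d` but not in
`p^{n+1}ℤ^d`, then `𝟙M^j ∉ p^{n+1}ℤ^d` for all `j ≥ i`.
(ii) Consequently, if `𝟙M^k ∈ p^nℤ^d` for some `n, k`, then `𝟙M^{nd} ∈ p^nℤ^d`. -/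
theorem ones_vecMul_power_stability
    {d : ℕ} (hd : 1 ≤ d) (M : Matrix (Fin d) (Fin d) ℤ) (p : ℕ) (hp : p.Prime) :
    (∀ n i : ℕ,
      (∀ j : ℕ, i ≤ j → j ≤ i + d →
        (∀ t : Fin d, (p : ℤ) ^ n ∣ Matrix.vecMul 1 (M ^ j) t) ∧
        ¬ (∀ t : Fin d, (p : ℤ) ^ (n + 1) ∣ Matrix.vecMul 1 (M ^ j) t)) →
      ∀ j : ℕ, i ≤ j →
        ¬ (∀ t : Fin d, (p : ℤ) ^ (n + 1) ∣ Matrix.vecMul 1 (M ^ j) t)) ∧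
    (∀ n k : ℕ, (∀ t : Fin d, (p : ℤ) ^ n ∣ Matrix.vecMul 1 (M ^ k) t) →
      ∀ t : Fin d, (p : ℤ) ^ n ∣ Matrix.vecMul 1 (M ^ (n * d)) t) :=
  ones_vecMul_power_stability_general M p hp
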